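/- Let A, B, C, D be topological groups and let p: A → B and q: C → D be continuous surjective group homomorphisms that are covering maps, whose kernels are {1, a} and {1, c} respectively, where a is a central element of A of order 2 and c is a central element of C of order 2. Let Z be the subgroup of A × C generated by (a, c). Then the induced map Φ: (A × C)/Z → B × D, sending the class of (x, y) to (p(x), q(y)), is a well-defined continuous group homomorphism which is a covering map, and every fiber of Φ has exactly two elements. -/

import Mathlib

/-!
Write `π : A × C → (A × C) ⧸ ⟨(a, c)⟩` for the projection, so that `Φ ∘ π = p × q`. Covering maps
are open, so `p × q` is an open quotient map, and its kernel `ker p × ker q` is discrete, being a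
product of fibres of covering maps. As `π` is open and surjective, `Φ` is again an open quotient
map, with discrete kernel `π (ker p × ker q) = {1, π (a, 1)}`. A surjective open homomorphism of
topological groups with discrete kernel is a covering map whose fibres are torsors under the
kernel, so every fibre of `Φ` has two points.
-/

theorem closure_singleton_central_normal {G : Type*} [Group G] {x : G}
    (hx : ∀ g : G, g * x = x * g) : (Subgroup.closure {x}).Normal := by
  have hle : Subgroup.closure {x} ≤ Subgroup.center G := by
    rw [Subgroup.closure_le]
    intro y hy
    rcases hy with rfl
    rw [SetLike.mem_coe, Subgroup.mem_center_iff]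
    exact hx
  constructor
  intro n hn g
  have hc := Subgroup.mem_center_iff.mp (hle hn) g
  have : g * n * g⁻¹ = n := by rw [hc]; group
  rwa [this]

theorem Subgroup.mem_closure_singleton_of_mul_self_eq_one {G : Type*} [Group G] {g x : G}
    (hg : g * g = 1) : x ∈ closure {g} ↔ x = 1 ∨ x = g := by
  refine ⟨fun hx => ?_, ?_⟩
  · induction hx using closure_induction with
    | mem y hy => exact Or.inr hy
    | one => exact Or.inl rfl
    | mul y z _ _ hy hz => rcases hy with rfl | rfl <;> rcases hz with rfl | rfl <;> simp [hg]
    | inv y _ hy => rcases hy with rfl | rfl <;> simp [inv_eq_of_mul_eq_one_right hg]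
  · rintro (rfl | rfl)
    exacts [one_mem _, subset_closure rfl]

section Discrete

variable {X Y : Type*} [TopologicalSpace X] [TopologicalSpace Y]

theorem IsDiscrete.prod {s : Set X} {t : Set Y} (hs : IsDiscrete s) (ht : IsDiscrete t) :
    IsDiscrete (s ×ˢ t) := by
  rw [isDiscrete_iff_nhdsWithin] at *
  rintro ⟨x, y⟩ ⟨hx, hy⟩
  rw [nhdsWithin_prod_eq, hs x hx, ht y hy, Filter.prod_pure_pure]

theorem IsDiscrete.of_preimage_of_isOpenMap {f : X → Y} (hf : IsOpenMap f)
    (hsurj : Function.Surjective f) {s : Set Y} (hs : IsDiscrete (f ⁻¹' s)) : IsDiscrete s := by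
  rw [isDiscrete_iff_forall_mem_exists_isOpen] at *
  intro y hy
  obtain ⟨x, rfl⟩ := hsurj y
  obtain ⟨u, hu, hux⟩ := hs x hy
  exact ⟨f '' u, hf u hu, by rw [← Set.image_inter_preimage, hux, Set.image_singleton]⟩

end Discrete

namespace IsCoveringMap

theorem isOpenQuotientMap {E X : Type*} [TopologicalSpace E] [TopologicalSpace X] {f : E → X}
    (hf : IsCoveringMap f) (hsurj : Function.Surjective f) : IsOpenQuotientMap f :=
  ⟨hsurj, hf.continuous, hf.isOpenMap⟩

theorem isDiscrete_ker {G H : Type*} [Group G] [TopologicalSpace G] [Group H] [TopologicalSpace H]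
    {f : G →* H} (hf : IsCoveringMap f) : IsDiscrete (f.ker : Set G) :=
  isDiscrete_iff_discreteTopology.mpr (hf 1).discreteTopology_fiber

end IsCoveringMap

theorem IsQuotientCoveringMap.natCard_fiber {E X G : Type*} [TopologicalSpace E]
    [TopologicalSpace X] [Group G] [MulAction G E] {f : E → X} (hf : IsQuotientCoveringMap f G)
    (x : X) : Nat.card (f ⁻¹' {x}) = Nat.card G :=
  have ⟨e, he⟩ := hf.surjective x
  Nat.card_congr (hf.fiberEquivGroup ⟨e, he⟩)

namespace QuotientGroup

theorem isQuotientCoveringMap_lift {G H : Type*} [Group G] [TopologicalSpace G]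
    [IsTopologicalGroup G] [Group H] [TopologicalSpace H] (N : Subgroup G) [N.Normal]
    (f : G →* H) (hN : N ≤ f.ker) (hf : IsOpenQuotientMap f) (hker : IsDiscrete (f.ker : Set G)) :
    IsQuotientCoveringMap (lift N f hN) (lift N f hN).ker := by
  have hπ : IsOpenQuotientMap (mk : G → G ⧸ N) := isOpenQuotientMap_mk
  have hΦ : IsOpenQuotientMap (lift N f hN) := (hπ.of_comp_iff (g := lift N f hN)).mp hf
  exact hΦ.isQuotientMap.isQuotientCoveringMap_of_isDiscrete_ker_monoidHom
    (.of_preimage_of_isOpenMap hπ.isOpenMap hπ.surjective hker)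

section ProdMap

variable {A B C D : Type*} [Group A] [Group B] [Group C] [Group D] {p : A →* B} {q : C →* D}
  {a : A} {c : C}

theorem coe_ker_lift_prodMap (N : Subgroup (A × C)) [N.Normal] (hN : N ≤ (p.prodMap q).ker)
    (hker_p : (p.ker : Set A) = {1, a}) (hker_q : (q.ker : Set C) = {1, c}) (hc : c * c = 1)
    (hac : (a, c) ∈ N) :
    ((lift N _ hN).ker : Set ((A × C) ⧸ N)) = {1, (((a, 1) : A × C) : (A × C) ⧸ N)} := by
  have hac' : (((a, c) : A × C) : (A × C) ⧸ N) = 1 := (eq_one_iff _).mpr hac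
  have h1c : (((1, c) : A × C) : (A × C) ⧸ N) = ((a, 1) : A × C) := by
    rw [QuotientGroup.eq]
    simpa [inv_eq_of_mul_eq_one_right hc] using hac
  rw [ker_lift, Subgroup.coe_map, MonoidHom.ker_prodMap, Subgroup.coe_prod, hker_p, hker_q]
  simp [Set.insert_prod, Set.prod_insert, Set.image_insert_eq, hac', h1c, Prod.mk_one_one]

theorem natCard_ker_lift_prodMap_closure (hker_p : (p.ker : Set A) = {1, a})
    (hker_q : (q.ker : Set C) = {1, c}) (ha_ne : a ≠ 1) (ha_sq : a * a = 1) (hc_ne : c ≠ 1)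
    (hc_sq : c * c = 1) [(Subgroup.closure {((a, c) : A × C)}).Normal]
    (hN : Subgroup.closure {((a, c) : A × C)} ≤ (p.prodMap q).ker) :
    Nat.card (lift _ _ hN).ker = 2 := by
  have hac_sq : ((a, c) : A × C) * (a, c) = 1 := Prod.ext ha_sq hc_sq
  have ha1 : (((a, 1) : A × C) : (A × C) ⧸ Subgroup.closure {((a, c) : A × C)}) ≠ 1 := by
    rw [Ne, eq_one_iff, Subgroup.mem_closure_singleton_of_mul_self_eq_one hac_sq]
    simp [ha_ne, hc_ne.symm]
  rw [← SetLike.coe_sort_coe, coe_ker_lift_prodMap _ hN hker_p hker_q hc_sq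
    (Subgroup.subset_closure rfl), Nat.card_coe_set_eq, Set.ncard_pair ha1.symm]

end ProdMap

end QuotientGroup

theorem statement6_general {A B C D : Type*}
    [Group A] [TopologicalSpace A] [IsTopologicalGroup A]
    [Group B] [TopologicalSpace B] [IsTopologicalGroup B]
    [Group C] [TopologicalSpace C] [IsTopologicalGroup C]
    [Group D] [TopologicalSpace D] [IsTopologicalGroup D]
    (p : A →* B) (q : C →* D)
    (hp_surj : Function.Surjective p) (hq_surj : Function.Surjective q)
    (hp_cov : IsCoveringMap p) (hq_cov : IsCoveringMap q)
    (a : A) (c : C)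
    (ha_cent : ∀ x : A, x * a = a * x) (hc_cent : ∀ y : C, y * c = c * y)
    (ha_ne : a ≠ 1) (ha_sq : a * a = 1)
    (hc_ne : c ≠ 1) (hc_sq : c * c = 1)
    (hker_p : (MonoidHom.ker p : Set A) = {1, a})
    (hker_q : (MonoidHom.ker q : Set C) = {1, c}) :
    letI : (Subgroup.closure {((a, c) : A × C)}).Normal :=
      closure_singleton_central_normal
        (fun g => Prod.ext (ha_cent g.1) (hc_cent g.2))
    ∃ Φ : ((A × C) ⧸ Subgroup.closure {((a, c) : A × C)}) →* B × D,
      (∀ (x : A) (y : C), Φ (QuotientGroup.mk (x, y)) = (p x, q y)) ∧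
      Continuous Φ ∧
      IsCoveringMap Φ ∧
      (∀ z : B × D, Nat.card (⇑Φ ⁻¹' {z}) = 2) := by
  let : (Subgroup.closure {((a, c) : A × C)}).Normal :=
    closure_singleton_central_normal (fun g => Prod.ext (ha_cent g.1) (hc_cent g.2))
  have hN : Subgroup.closure {((a, c) : A × C)} ≤ (p.prodMap q).ker := by
    rw [Subgroup.closure_le, Set.singleton_subset_iff, SetLike.mem_coe, MonoidHom.ker_prodMap]
    exact ⟨show a ∈ (p.ker : Set A) by simp [hker_p], show c ∈ (q.ker : Set C) by simp [hker_q]⟩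
  have hker : IsDiscrete ((p.prodMap q).ker : Set (A × C)) := by
    rw [MonoidHom.ker_prodMap, Subgroup.coe_prod]
    exact hp_cov.isDiscrete_ker.prod hq_cov.isDiscrete_ker
  have hΦ := QuotientGroup.isQuotientCoveringMap_lift _ _ hN
    ((hp_cov.isOpenQuotientMap hp_surj).prodMap (hq_cov.isOpenQuotientMap hq_surj)) hker
  refine ⟨_, fun _ _ => rfl, hΦ.isCoveringMap.continuous, hΦ.isCoveringMap, fun z => ?_⟩
  rw [hΦ.natCard_fiber,
    QuotientGroup.natCard_ker_lift_prodMap_closure hker_p hker_q ha_ne ha_sq hc_ne hc_sq]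

/-- (General form of part (1) of the paper's Proposition 2.1.)
If `p : A → B` and `q : C → D` are continuous surjective homomorphisms of topological
groups which are covering maps with kernels `{1, a}` and `{1, c}`, where `a` and `c`
are central of order two, then the induced homomorphism
`(A × C)/⟨(a, c)⟩ → B × D` is continuous, is a covering map, and has all fibres
of cardinality two. -/
theorem statement6 {A B C D : Type*}
    [Group A] [TopologicalSpace A] [IsTopologicalGroup A]
    [Group B] [TopologicalSpace B] [IsTopologicalGroup B]
    [Group C] [TopologicalSpace C] [IsTopologicalGroup C]
    [Group D] [TopologicalSpace D] [IsTopologicalGroup D]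
    (p : A →* B) (q : C →* D)
    (hp_cont : Continuous p) (hq_cont : Continuous q)
    (hp_surj : Function.Surjective p) (hq_surj : Function.Surjective q)
    (hp_cov : IsCoveringMap p) (hq_cov : IsCoveringMap q)
    (a : A) (c : C)
    (ha_cent : ∀ x : A, x * a = a * x) (hc_cent : ∀ y : C, y * c = c * y)
    (ha_ne : a ≠ 1) (ha_sq : a * a = 1)
    (hc_ne : c ≠ 1) (hc_sq : c * c = 1)
    (hker_p : (MonoidHom.ker p : Set A) = {1, a})
    (hker_q : (MonoidHom.ker q : Set C) = {1, c}) :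
    letI : (Subgroup.closure {((a, c) : A × C)}).Normal :=
      closure_singleton_central_normal
        (fun g => Prod.ext (ha_cent g.1) (hc_cent g.2))
    ∃ Φ : ((A × C) ⧸ Subgroup.closure {((a, c) : A × C)}) →* B × D,
      (∀ (x : A) (y : C), Φ (QuotientGroup.mk (x, y)) = (p x, q y)) ∧
      Continuous Φ ∧
      IsCoveringMap Φ ∧
      (∀ z : B × D, Nat.card (⇑Φ ⁻¹' {z}) = 2) :=
  statement6_general p q hp_surj hq_surj hp_cov hq_cov a c ha_cent hc_cent ha_ne ha_sq hc_ne hc_sq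
    hker_p hker_q
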